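/- For the simple random walk in the quarter plane (steps E, W, N, S), the number of excursions of length 2n from the origin back to the origin staying in ℤ₊² is f(0,0,2n) = Catalan(n)·Catalan(n+1), and asymptotically f(0,0,2n) ~ (4/π)·16ⁿ/n³ as n → ∞. -/

import Mathlib

open Filter

/-- A sequence of steps is a simple quarter-plane walk if every step is one of
E, W, N, S and every partial sum stays in `ℤ₊²`. -/
def IsQWalk (l : List (ℤ × ℤ)) : Prop :=
  (∀ s ∈ l, s ∈ ({(1, 0), (-1, 0), (0, 1), (0, -1)} : Set (ℤ × ℤ))) ∧
  ∀ k ≤ l.length, 0 ≤ ((l.take k).sum).1 ∧ 0 ≤ ((l.take k).sum).2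

/-- `qwalkCount i j n` = number of simple quarter-plane walks of length `n`
from `(0,0)` to `(i,j)`. -/
noncomputable def qwalkCount (i j : ℤ) (n : ℕ) : ℕ :=
  Nat.card {l : List (ℤ × ℤ) // l.length = n ∧ IsQWalk l ∧ l.sum = (i, j)}

namespace QWAux

open List DyckStep



/-- 1D nonnegative excursion lists -/
def Exc (m : ℕ) : Type :=
  {h : List ℤ // h.length = m ∧ (∀ x ∈ h, x = 1 ∨ x = -1) ∧
    (∀ k, 0 ≤ (h.take k).sum) ∧ h.sum = 0}

def stepToInt : DyckStep → ℤ | U => 1 | D => -1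

def intToStep (x : ℤ) : DyckStep := if x = 1 then U else D

lemma count_U_add_count_D (l : List DyckStep) : l.count U + l.count D = l.length := by
  induction l with
  | nil => simp
  | cons a t ih => cases a <;> simp [List.count_cons] <;> omega

lemma sum_map_stepToInt (l : List DyckStep) :
    (l.map stepToInt).sum = (l.count U : ℤ) - l.count D := by
  induction l with
  | nil => simp
  | cons a t ih => cases a <;> simp [stepToInt, ih, List.count_cons] <;> ring

lemma map_stepToInt_intToStep (h : List ℤ) (hh : ∀ x ∈ h, x = 1 ∨ x = -1) :
    (h.map intToStep).map stepToInt = h := by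
  rw [List.map_map]
  apply List.map_congr_left ?_ |>.trans h.map_id
  intro x hx
  rcases hh x hx with rfl | rfl <;> simp [intToStep, stepToInt]

lemma map_intToStep_stepToInt (l : List DyckStep) :
    (l.map stepToInt).map intToStep = l := by
  rw [List.map_map]
  apply List.map_congr_left ?_ |>.trans l.map_id
  intro x hx
  cases x <;> simp [intToStep, stepToInt]

def excEquiv (k : ℕ) : Exc (2 * k) ≃ {p : DyckWord // p.semilength = k} where
  toFun x := by
    obtain ⟨h, hlen, hpm, hpre, hsum⟩ := x
    refine ⟨⟨h.map intToStep, ?_, ?_⟩, ?_⟩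
    · have := sum_map_stepToInt (h.map intToStep)
      rw [map_stepToInt_intToStep h hpm, hsum] at this
      omega
    · intro i
      rw [← List.map_take]
      have := sum_map_stepToInt ((h.take i).map intToStep)
      rw [map_stepToInt_intToStep _ (fun x hx => hpm x (h.take_subset i hx))] at this
      have h2 := hpre i
      omega
    · show (h.map intToStep).count U = k
      have h1 := count_U_add_count_D (h.map intToStep)
      have h2 := sum_map_stepToInt (h.map intToStep)
      rw [map_stepToInt_intToStep h hpm, hsum] at h2
      rw [List.length_map, hlen] at h1
      omega
  invFun x := by
    obtain ⟨⟨l, hbal, hpre⟩, hsl⟩ := x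
    refine ⟨l.map stepToInt, ?_, ?_, ?_, ?_⟩
    · have := count_U_add_count_D l
      rw [List.length_map]
      unfold DyckWord.semilength at hsl
      simp at hsl
      omega
    · intro x hx
      obtain ⟨s, _, rfl⟩ := List.mem_map.mp hx
      cases s <;> simp [stepToInt]
    · intro i
      rw [← List.map_take]
      have := sum_map_stepToInt (l.take i)
      have h2 := hpre i
      omega
    · have := sum_map_stepToInt l
      omega
  left_inv := by
    rintro ⟨h, hlen, hpm, hpre, hsum⟩
    exact Subtype.ext (map_stepToInt_intToStep h hpm)
  right_inv := by
    rintro ⟨⟨l, hbal, hpre⟩, hsl⟩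
    refine Subtype.ext ?_
    ext1
    exact map_intToStep_stepToInt l

lemma two_dvd_length_of_sum (h : List ℤ) (hpm : ∀ x ∈ h, x = 1 ∨ x = -1)
    (hsum : h.sum = 0) : 2 ∣ h.length := by
  have key : ∀ l : List ℤ, (∀ x ∈ l, x = 1 ∨ x = -1) → (2 : ℤ) ∣ (l.sum + l.length) := by
    intro l hl
    induction l with
    | nil => simp
    | cons a t ih =>
      have ha := hl a (List.mem_cons_self)
      have ht := ih (fun x hx => hl x (List.mem_cons_of_mem a hx))
      simp only [List.sum_cons, List.length_cons]
      rcases ha with rfl | rfl <;> push_cast <;> omega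
  have := key h hpm
  rw [hsum] at this
  omega

lemma excIsEmpty (m : ℕ) (hm : ¬ 2 ∣ m) : IsEmpty (Exc m) := by
  constructor
  rintro ⟨h, hlen, hpm, -, hsum⟩
  exact hm (hlen ▸ two_dvd_length_of_sum h hpm hsum)

instance excFinite (m : ℕ) : Finite (Exc m) := by
  rcases Nat.even_or_odd m with ⟨k, rfl⟩ | hodd
  · have h2 : k + k = 2 * k := by ring
    rw [h2]
    exact Finite.of_equiv _ (excEquiv k).symm
  · obtain ⟨k, rfl⟩ := hodd
    have := excIsEmpty (2 * k + 1) (by omega)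
    infer_instance

lemma excCard_even (k : ℕ) : Nat.card (Exc (2 * k)) = catalan k := by
  rw [Nat.card_congr (excEquiv k), Nat.card_eq_fintype_card,
    DyckWord.card_dyckWord_semilength_eq_catalan]

lemma excCard_odd (m : ℕ) (hm : ¬ 2 ∣ m) : Nat.card (Exc m) = 0 := by
  have := excIsEmpty m hm
  exact Nat.card_of_isEmpty





def SSet : Set (ℤ × ℤ) := {(1, 0), (-1, 0), (0, 1), (0, -1)}

def decode : List Bool → List ℤ → List ℤ → List (ℤ × ℤ)
  | [], _, _ => []
  | true :: c, h, v => (h.headI, 0) :: decode c h.tail v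
  | false :: c, h, v => (0, v.headI) :: decode c h v.tail

@[simp] lemma decode_nil (h v) : decode [] h v = [] := rfl
@[simp] lemma decode_true (c h v) :
    decode (true :: c) h v = (h.headI, 0) :: decode c h.tail v := rfl
@[simp] lemma decode_false (c h v) :
    decode (false :: c) h v = (0, v.headI) :: decode c h v.tail := rfl

lemma length_decode (c : List Bool) (h v : List ℤ) : (decode c h v).length = c.length := by
  induction c generalizing h v with
  | nil => rfl
  | cons b c ih => cases b <;> simp [ih]

lemma mem_decode (c : List Bool) (h v : List ℤ)
    (hh : ∀ x ∈ h, x = 1 ∨ x = -1) (hv : ∀ x ∈ v, x = 1 ∨ x = -1)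
    (lh : h.length = c.count true) (lv : v.length = c.count false) :
    ∀ s ∈ decode c h v, s ∈ SSet := by
  induction c generalizing h v with
  | nil => simp
  | cons b c ih =>
    cases b
    · rcases v with - | ⟨w, v⟩
      · simp [List.count_cons] at lv
      · simp only [decode_false, List.mem_cons, List.tail_cons, List.headI_cons]
        rintro s (rfl | hs)
        · rcases hv w (List.mem_cons_self) with rfl | rfl <;> simp [SSet]
        · exact ih h v hh (fun x hx => hv x (List.mem_cons_of_mem w hx))
            (by simpa [List.count_cons] using lh) (by simp [List.count_cons] at lv; omega) s hs
    · rcases h with - | ⟨a, h⟩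
      · simp [List.count_cons] at lh
      · simp only [decode_true, List.mem_cons, List.tail_cons, List.headI_cons]
        rintro s (rfl | hs)
        · rcases hh a (List.mem_cons_self) with rfl | rfl <;> simp [SSet]
        · exact ih h v (fun x hx => hh x (List.mem_cons_of_mem a hx)) hv
            (by simp [List.count_cons] at lh; omega) (by simpa [List.count_cons] using lv) s hs

lemma take_sum_decode (c : List Bool) (h v : List ℤ)
    (lh : h.length = c.count true) (lv : v.length = c.count false) (k : ℕ) :
    ((decode c h v).take k).sum =
      ((h.take ((c.take k).count true)).sum, (v.take ((c.take k).count false)).sum) := by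
  induction c generalizing h v k with
  | nil => simp; rfl
  | cons b c ih =>
    rcases k with - | k
    · simp; rfl
    cases b
    · rcases v with - | ⟨w, v⟩
      · simp [List.count_cons] at lv
      · have := ih h v (by simpa [List.count_cons] using lh)
          (by simp [List.count_cons] at lv; omega) k
        simp only [decode_false, List.take_succ_cons, List.sum_cons, List.tail_cons,
          List.headI_cons, List.count_cons, this]
        simp [Prod.ext_iff]
    · rcases h with - | ⟨a, h⟩
      · simp [List.count_cons] at lh
      · have := ih h v (by simp [List.count_cons] at lh; omega)
          (by simpa [List.count_cons] using lv) k
        simp only [decode_true, List.take_succ_cons, List.sum_cons, List.tail_cons,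
          List.headI_cons, List.count_cons, this]
        simp [Prod.ext_iff]

lemma sum_decode (c : List Bool) (h v : List ℤ)
    (lh : h.length = c.count true) (lv : v.length = c.count false) :
    (decode c h v).sum = (h.sum, v.sum) := by
  have := take_sum_decode c h v lh lv c.length
  rwa [List.take_of_length_le (by rw [length_decode]), List.take_length,
    List.take_of_length_le (le_of_eq lh), List.take_of_length_le (le_of_eq lv)] at this

lemma exists_take_count (c : List Bool) (b : Bool) (j : ℕ) (hj : j ≤ c.count b) :
    ∃ k ≤ c.length, (c.take k).count b = j := by
  induction c generalizing j with
  | nil => exact ⟨0, le_rfl, by simp at hj ⊢; omega⟩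
  | cons a c ih =>
    rcases j with - | j
    · exact ⟨0, by simp⟩
    by_cases hab : a = b
    · subst hab
      simp only [List.count_cons_self] at hj
      obtain ⟨k, hk, hck⟩ := ih j (by omega)
      exact ⟨k + 1, by simpa using hk, by simpa [List.count_cons] using hck⟩
    · have : (a :: c).count b = c.count b := by simp [List.count_cons, hab]
      rw [this] at hj
      obtain ⟨k, hk, hck⟩ := ih (j + 1) hj
      exact ⟨k + 1, by simpa using hk, by simpa [List.count_cons, hab] using hck⟩

def mask (l : List (ℤ × ℤ)) : List Bool := l.map fun s => decide (s.2 = 0)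
def hor (l : List (ℤ × ℤ)) : List ℤ := (l.filter fun s => decide (s.2 = 0)).map Prod.fst
def ver (l : List (ℤ × ℤ)) : List ℤ := (l.filter fun s => !decide (s.2 = 0)).map Prod.snd

lemma decode_encode (l : List (ℤ × ℤ)) (hl : ∀ s ∈ l, s ∈ SSet) :
    decode (mask l) (hor l) (ver l) = l := by
  induction l with
  | nil => rfl
  | cons s t ih =>
    have hs := hl s (List.mem_cons_self)
    have ht := ih fun x hx => hl x (List.mem_cons_of_mem s hx)
    rcases hs with rfl | rfl | rfl | rfl <;>
      simp_all [mask, hor, ver, SSet]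

lemma length_hor (l : List (ℤ × ℤ)) : (hor l).length = (mask l).count true := by
  induction l with
  | nil => rfl
  | cons s t ih =>
    by_cases hs : s.2 = 0 <;> simp [mask, hor, List.count_cons, hs] at * <;> omega

lemma length_ver (l : List (ℤ × ℤ)) : (ver l).length = (mask l).count false := by
  induction l with
  | nil => rfl
  | cons s t ih =>
    by_cases hs : s.2 = 0 <;> simp [mask, ver, List.count_cons, hs] at * <;> omega

lemma mask_decode (c : List Bool) (h v : List ℤ)
    (hv : ∀ x ∈ v, x ≠ 0) (lv : v.length = c.count false) :
    mask (decode c h v) = c := by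
  induction c generalizing h v with
  | nil => rfl
  | cons b c ih =>
    cases b
    · rcases v with - | ⟨w, v⟩
      · simp [List.count_cons] at lv
      · have := ih h v (fun x hx => hv x (List.mem_cons_of_mem w hx))
          (by simp [List.count_cons] at lv; omega)
        have hw := hv w (List.mem_cons_self)
        simp [mask, this, hw] at *
        exact this
    · have := ih h.tail v hv (by simpa [List.count_cons] using lv)
      simp [mask] at *
      exact this

lemma hor_decode (c : List Bool) (h v : List ℤ)
    (hv : ∀ x ∈ v, x ≠ 0) (lh : h.length = c.count true) (lv : v.length = c.count false) :
    hor (decode c h v) = h := by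
  induction c generalizing h v with
  | nil => simpa [hor] using (List.length_eq_zero_iff.mp (by simpa using lh)).symm
  | cons b c ih =>
    cases b
    · rcases v with - | ⟨w, v⟩
      · simp [List.count_cons] at lv
      · have := ih h v (fun x hx => hv x (List.mem_cons_of_mem w hx))
          (by simpa [List.count_cons] using lh) (by simp [List.count_cons] at lv; omega)
        have hw := hv w (List.mem_cons_self)
        simp [hor, hw] at *
        exact this
    · rcases h with - | ⟨a, h⟩
      · simp [List.count_cons] at lh
      · have := ih h v hv (by simp [List.count_cons] at lh; omega)
          (by simpa [List.count_cons] using lv)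
        simp [hor] at *
        exact this

lemma ver_decode (c : List Bool) (h v : List ℤ)
    (hv : ∀ x ∈ v, x ≠ 0) (lv : v.length = c.count false) :
    ver (decode c h v) = v := by
  induction c generalizing h v with
  | nil => simpa [ver] using (List.length_eq_zero_iff.mp (by simpa using lv)).symm
  | cons b c ih =>
    cases b
    · rcases v with - | ⟨w, v⟩
      · simp [List.count_cons] at lv
      · have := ih h v (fun x hx => hv x (List.mem_cons_of_mem w hx))
          (by simp [List.count_cons] at lv; omega)
        have hw := hv w (List.mem_cons_self)
        simp [ver, hw] at *
        exact this
    · have := ih h.tail v hv (by simpa [List.count_cons] using lv)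
      simp [ver] at *
      exact this


lemma mem_SSet_iff (s : ℤ × ℤ) :
    s ∈ SSet ↔ s = (1,0) ∨ s = (-1,0) ∨ s = (0,1) ∨ s = (0,-1) := by
  simp [SSet]

def Walks (m : ℕ) : Type :=
  {l : List (ℤ × ℤ) // l.length = m ∧ IsQWalk l ∧ l.sum = (0, 0)}

lemma isQWalk_iff (l : List (ℤ × ℤ)) :
    IsQWalk l ↔ (∀ s ∈ l, s ∈ SSet) ∧
      ∀ k ≤ l.length, 0 ≤ ((l.take k).sum).1 ∧ 0 ≤ ((l.take k).sum).2 := Iff.rfl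

lemma count_true_add_count_false (c : List Bool) : c.count true + c.count false = c.length := by
  induction c with
  | nil => rfl
  | cons a t ih => cases a <;> simp [List.count_cons] <;> omega

section WE
variable {m : ℕ}

lemma hor_mem (l : List (ℤ × ℤ)) (hmem : ∀ s ∈ l, s ∈ SSet) :
    ∀ x ∈ hor l, x = 1 ∨ x = -1 := by
  intro x hx
  obtain ⟨s, hs, rfl⟩ := List.mem_map.mp hx
  have h1 := List.of_mem_filter hs
  have h2 := hmem s (List.mem_of_mem_filter hs)
  rcases (mem_SSet_iff s).mp h2 with rfl | rfl | rfl | rfl <;> simp_all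

lemma ver_mem (l : List (ℤ × ℤ)) (hmem : ∀ s ∈ l, s ∈ SSet) :
    ∀ x ∈ ver l, x = 1 ∨ x = -1 := by
  intro x hx
  obtain ⟨s, hs, rfl⟩ := List.mem_map.mp hx
  have h1 := List.of_mem_filter hs
  have h2 := hmem s (List.mem_of_mem_filter hs)
  rcases (mem_SSet_iff s).mp h2 with rfl | rfl | rfl | rfl <;> simp_all

def walkTo (m : ℕ) (x : Walks m) :
    Σ c : List.Vector Bool m, Exc (c.1.count true) × Exc (c.1.count false) :=
    ⟨⟨mask x.1, by
        obtain ⟨l, hlen, -, -⟩ := x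
        simpa [mask] using hlen⟩,
     ⟨hor x.1, by
        obtain ⟨l, hlen, ⟨hmem, hpre⟩, hsum⟩ := x
        have hede := decode_encode l hmem
        have lh := length_hor l
        have lv := length_ver l
        refine ⟨lh, hor_mem l hmem, ?_, ?_⟩
        · have hb : ∀ j ≤ (hor l).length, 0 ≤ ((hor l).take j).sum := by
            intro j hj
            obtain ⟨k, hk, hck⟩ := exists_take_count (mask l) true j (by omega)
            have h1 := (hpre k (by simpa [mask] using hk)).1
            have h2 := take_sum_decode (mask l) (hor l) (ver l) lh lv k
            rw [hede] at h2
            rw [h2] at h1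
            rwa [hck] at h1
          intro j
          rcases le_or_gt j (hor l).length with hj | hj
          · exact hb j hj
          · have := hb (hor l).length le_rfl
            rw [List.take_length] at this
            rwa [List.take_of_length_le hj.le]
        · have hs := sum_decode (mask l) (hor l) (ver l) lh lv
          rw [hede, hsum] at hs
          exact (Prod.mk.injEq _ _ _ _).mp hs.symm |>.1⟩,
     ⟨ver x.1, by
        obtain ⟨l, hlen, ⟨hmem, hpre⟩, hsum⟩ := x
        have hede := decode_encode l hmem
        have lh := length_hor l
        have lv := length_ver l
        refine ⟨lv, ver_mem l hmem, ?_, ?_⟩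
        · have hb : ∀ j ≤ (ver l).length, 0 ≤ ((ver l).take j).sum := by
            intro j hj
            obtain ⟨k, hk, hck⟩ := exists_take_count (mask l) false j (by omega)
            have h1 := (hpre k (by simpa [mask] using hk)).2
            have h2 := take_sum_decode (mask l) (hor l) (ver l) lh lv k
            rw [hede] at h2
            rw [h2] at h1
            rwa [hck] at h1
          intro j
          rcases le_or_gt j (ver l).length with hj | hj
          · exact hb j hj
          · have := hb (ver l).length le_rfl
            rw [List.take_length] at this
            rwa [List.take_of_length_le hj.le]
        · have hs := sum_decode (mask l) (hor l) (ver l) lh lv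
          rw [hede, hsum] at hs
          exact (Prod.mk.injEq _ _ _ _).mp hs.symm |>.2⟩⟩
def walkInv (m : ℕ)
    (y : Σ c : List.Vector Bool m, Exc (c.1.count true) × Exc (c.1.count false)) :
    Walks m :=
    ⟨decode y.1.1 y.2.1.1 y.2.2.1, by
      obtain ⟨⟨c, hc⟩, ⟨h, lh, hpm, hpre, hsum⟩, ⟨v, lv, vpm, vpre, vsum⟩⟩ := y
      refine ⟨by rw [length_decode]; exact hc, ⟨mem_decode c h v hpm vpm lh lv, ?_⟩, ?_⟩
      · intro k _
        rw [take_sum_decode c h v lh lv k]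
        exact ⟨hpre _, vpre _⟩
      · rw [sum_decode c h v lh lv, hsum, vsum]⟩

noncomputable def walkEquiv (m : ℕ) :
    Walks m ≃ Σ c : List.Vector Bool m, Exc (c.1.count true) × Exc (c.1.count false) := by
  refine (Equiv.ofBijective (walkInv m) ⟨?_, ?_⟩).symm
  · rintro ⟨⟨c, hc⟩, ⟨h, lh, hpm, hpre, hsum⟩, ⟨v, lv, vpm, vpre, vsum⟩⟩
      ⟨⟨c', hc'⟩, ⟨h', lh', hpm', hpre', hsum'⟩, ⟨v', lv', vpm', vpre', vsum'⟩⟩ hE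
    have hvne : ∀ x ∈ v, x ≠ 0 := by
      intro x hx; rcases vpm x hx with rfl | rfl <;> simp
    have hvne' : ∀ x ∈ v', x ≠ 0 := by
      intro x hx; rcases vpm' x hx with rfl | rfl <;> simp
    have hdec : decode c h v = decode c' h' v' := congrArg Subtype.val hE
    have ec : c = c' := by
      rw [← mask_decode c h v hvne lv, ← mask_decode c' h' v' hvne' lv', hdec]
    have eh : h = h' := by
      rw [← hor_decode c h v hvne lh lv, ← hor_decode c' h' v' hvne' lh' lv', hdec]
    have ev : v = v' := by
      rw [← ver_decode c h v hvne lv, ← ver_decode c' h' v' hvne' lv', hdec]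
    subst ec
    subst eh
    subst ev
    rfl
  · intro x
    refine ⟨walkTo m x, ?_⟩
    exact Subtype.ext (decode_encode x.1 x.2.2.1.1)

end WE

noncomputable instance (m : ℕ) : Fintype (Exc m) := Fintype.ofFinite _

lemma count_ofFn {n : ℕ} (f : Fin n → Bool) (b : Bool) :
    (List.ofFn f).count b = (Finset.univ.filter fun i => f i = b).card := by
  induction n with
  | zero => simp
  | succ n ih =>
    rw [List.ofFn_succ, List.count_cons, ih, Finset.card_filter, Finset.card_filter,
      Fin.sum_univ_succ]
    simp only [beq_iff_eq]
    omega

def boolFunEquiv (m j : ℕ) :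
    {f : Fin m → Bool // (Finset.univ.filter fun i => f i = true).card = j} ≃
      {s : Finset (Fin m) // s.card = j} where
  toFun f := ⟨Finset.univ.filter fun i => f.1 i = true, f.2⟩
  invFun s := ⟨fun i => decide (i ∈ s.1), by
    have : (Finset.univ.filter fun i => (decide (i ∈ s.1)) = true) = s.1 := by
      ext i; simp
    rw [this]; exact s.2⟩
  left_inv f := by
    ext i
    simp
  right_inv s := by
    ext i
    simp

lemma card_cnt (m j : ℕ) :
    (Finset.univ.filter fun f : Fin m → Bool =>
      (Finset.univ.filter fun i => f i = true).card = j).card = m.choose j := by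
  rw [← Fintype.card_subtype, Fintype.card_congr (boolFunEquiv m j),
    Fintype.card_finset_len, Fintype.card_fin]

lemma card_walks (m : ℕ) :
    Nat.card (Walks m) =
      ∑ j ∈ Finset.range (m + 1),
        m.choose j * (Nat.card (Exc j) * Nat.card (Exc (m - j))) := by
  classical
  rw [Nat.card_congr (walkEquiv m), Nat.card_eq_fintype_card, Fintype.card_sigma]
  have step1 : ∀ c : List.Vector Bool m,
      Fintype.card (Exc (c.1.count true) × Exc (c.1.count false)) =
        Nat.card (Exc (c.1.count true)) * Nat.card (Exc (m - c.1.count true)) := by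
    intro c
    have hcf : c.1.count false = m - c.1.count true := by
      have := count_true_add_count_false c.1
      rw [c.2] at this
      omega
    rw [Fintype.card_prod, hcf, Nat.card_eq_fintype_card, Nat.card_eq_fintype_card]
  simp_rw [step1]
  have step2 : ∑ c : List.Vector Bool m,
      (Nat.card (Exc (c.1.count true)) * Nat.card (Exc (m - c.1.count true)))
      = ∑ f : Fin m → Bool, (Nat.card (Exc ((Finset.univ.filter fun i => f i = true).card)) *
          Nat.card (Exc (m - (Finset.univ.filter fun i => f i = true).card))) := by
    apply Fintype.sum_equiv (Equiv.vectorEquivFin Bool m)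
    intro c
    have hc : c.1.count true = (Finset.univ.filter fun i =>
        (Equiv.vectorEquivFin Bool m c) i = true).card := by
      show c.1.count true = (Finset.univ.filter fun i => c.get i = true).card
      conv_lhs => rw [← List.Vector.ofFn_get c]
      rw [show (List.Vector.ofFn c.get).1 = List.ofFn c.get from
        List.Vector.toList_ofFn c.get]
      exact count_ofFn c.get true
    rw [hc]
  rw [step2]
  rw [Finset.sum_comp (fun j => Nat.card (Exc j) * Nat.card (Exc (m - j)))
    (fun f : Fin m → Bool => (Finset.univ.filter fun i => f i = true).card)]
  have himg : Finset.image
      (fun f : Fin m → Bool => (Finset.univ.filter fun i => f i = true).card) Finset.univ ⊆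
        Finset.range (m + 1) := by
    intro j hj
    obtain ⟨f, -, rfl⟩ := Finset.mem_image.mp hj
    rw [Finset.mem_range]
    have h := Finset.card_filter_le (Finset.univ : Finset (Fin m)) (fun i => f i = true)
    simp only [Finset.card_univ, Fintype.card_fin] at h
    exact Nat.lt_succ_of_le h
  refine (Finset.sum_subset himg ?_).trans ?_
  · intro j _ hj
    have hemp : (Finset.univ.filter fun f : Fin m → Bool =>
        (Finset.univ.filter fun i => f i = true).card = j) = ∅ := by
      rw [Finset.filter_eq_empty_iff]
      intro f _ hf
      exact hj (Finset.mem_image.mpr ⟨f, Finset.mem_univ f, hf⟩)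
    rw [hemp]
    simp
  · exact Finset.sum_congr rfl fun j _ => by rw [card_cnt, smul_eq_mul]
lemma catalan_cast (k : ℕ) :
    (catalan k : ℚ) = (2 * k).factorial / ((k).factorial * (k + 1).factorial) := by
  have h := succ_mul_catalan_eq_centralBinom k
  have h2 : (k.centralBinom : ℚ) = (2 * k).factorial / ((k).factorial * (k).factorial) := by
    rw [Nat.centralBinom, Nat.cast_choose ℚ (by omega : k ≤ 2 * k)]
    have e : 2 * k - k = k := by omega
    rw [e]
  have h3 : ((k : ℚ) + 1) * catalan k = (2 * k).factorial / ((k).factorial * (k).factorial) := by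
    rw [← h2]
    exact_mod_cast congrArg (Nat.cast : ℕ → ℚ) h
  have hkf : (0 : ℚ) < (k).factorial := by exact_mod_cast Nat.factorial_pos k
  have hfact : ((k + 1).factorial : ℚ) = ((k : ℚ) + 1) * (k).factorial := by
    rw [Nat.factorial_succ]; push_cast; ring
  have h4 : ((k : ℚ) + 1) * catalan k * ((k).factorial * (k).factorial) =
      (2 * k).factorial :=
    (div_eq_iff (by positivity)).mp h3.symm |>.symm
  rw [hfact, eq_div_iff (by positivity)]
  linear_combination h4

lemma vandermonde_special (n : ℕ) :
    ∑ k ∈ Finset.range (n + 1), n.choose k * (n + 2).choose (k + 1) =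
      (2 * n + 2).choose (n + 1) := by
  have hv := Nat.add_choose_eq (m := n) (n := n + 2) (k := n + 1)
  rw [Finset.Nat.sum_antidiagonal_eq_sum_range_succ_mk] at hv
  dsimp only at hv
  have h2n : 2 * n + 2 = n + (n + 2) := by ring
  calc ∑ k ∈ Finset.range (n + 1), n.choose k * (n + 2).choose (k + 1)
      = ∑ k ∈ Finset.range (n + 1), n.choose k * (n + 2).choose (n + 1 - k) := by
        apply Finset.sum_congr rfl
        intro k hk
        rw [Finset.mem_range] at hk
        congr 1
        have he : n + 1 - k = (n + 2) - (k + 1) := by omega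
        rw [he, Nat.choose_symm (by omega)]
    _ = ∑ k ∈ Finset.range (n + 2), n.choose k * (n + 2).choose (n + 1 - k) := by
        rw [Finset.sum_range_succ (fun k => n.choose k * (n + 2).choose (n + 1 - k)) (n + 1),
          Nat.choose_eq_zero_of_lt (by omega : n < n + 1), zero_mul, add_zero]
    _ = (2 * n + 2).choose (n + 1) := by rw [h2n, hv]

lemma per_term (n k : ℕ) (hk : k ≤ n) :
    ((2 * n).choose (2 * k) : ℚ) * (catalan k * catalan (n - k)) =
      (2 * n).factorial / ((n).factorial * (n + 2).factorial) * (n.choose k * (n + 2).choose (k + 1)) := by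
  set j := n - k with hj
  have hkj : n = k + j := by omega
  have e1 : 2 * n - 2 * k = 2 * j := by omega
  rw [Nat.cast_choose ℚ (by omega : 2 * k ≤ 2 * n), e1,
    Nat.cast_choose ℚ (by omega : k ≤ n), Nat.cast_choose ℚ (by omega : k + 1 ≤ n + 2),
    catalan_cast k, catalan_cast j]
  have e2 : n - k = j := hj.symm
  have e3 : n + 2 - (k + 1) = j + 1 := by omega
  rw [e2, e3]
  have p0 : (0:ℚ) < (2 * n).factorial := by exact_mod_cast Nat.factorial_pos _
  have p1 : (0:ℚ) < (2 * k).factorial := by exact_mod_cast Nat.factorial_pos _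
  have p2 : (0:ℚ) < (2 * j).factorial := by exact_mod_cast Nat.factorial_pos _
  have p3 : (0:ℚ) < (k).factorial := by exact_mod_cast Nat.factorial_pos _
  have p4 : (0:ℚ) < (j).factorial := by exact_mod_cast Nat.factorial_pos _
  have p5 : (0:ℚ) < (k+1).factorial := by exact_mod_cast Nat.factorial_pos _
  have p6 : (0:ℚ) < (j+1).factorial := by exact_mod_cast Nat.factorial_pos _
  have p7 : (0:ℚ) < (n).factorial := by exact_mod_cast Nat.factorial_pos _
  have p8 : (0:ℚ) < (n+2).factorial := by exact_mod_cast Nat.factorial_pos _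
  field_simp

lemma key_identity (n : ℕ) :
    ∑ k ∈ Finset.range (n + 1), (2 * n).choose (2 * k) * (catalan k * catalan (n - k)) =
      catalan n * catalan (n + 1) := by
  have hq : ((∑ k ∈ Finset.range (n + 1),
      (2 * n).choose (2 * k) * (catalan k * catalan (n - k)) : ℕ) : ℚ) =
      ((catalan n * catalan (n + 1) : ℕ) : ℚ) := by
    push_cast
    have hterm : ∀ k ∈ Finset.range (n + 1),
        ((2 * n).choose (2 * k) : ℚ) * (catalan k * catalan (n - k)) =
          (2 * n).factorial / ((n).factorial * (n + 2).factorial) * (n.choose k * (n + 2).choose (k + 1)) := by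
      intro k hk
      exact per_term n k (by simpa using Nat.lt_succ_iff.mp (Finset.mem_range.mp hk))
    rw [Finset.sum_congr rfl hterm, ← Finset.mul_sum]
    have hv : (∑ k ∈ Finset.range (n + 1), (n.choose k : ℚ) * (n + 2).choose (k + 1)) =
        ((2 * n + 2).choose (n + 1) : ℚ) := by
      rw [← vandermonde_special n]
      push_cast
      rfl
    rw [hv]
    rw [Nat.cast_choose ℚ (by omega : n + 1 ≤ 2 * n + 2), catalan_cast n, catalan_cast (n + 1)]
    have e1 : 2 * n + 2 - (n + 1) = n + 1 := by omega
    have e2 : 2 * (n + 1) = 2 * n + 2 := by ring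
    rw [e1, e2]
    have p1 : (0:ℚ) < (n).factorial := by exact_mod_cast Nat.factorial_pos _
    have p2 : (0:ℚ) < (n+1).factorial := by exact_mod_cast Nat.factorial_pos _
    have p3 : (0:ℚ) < (n+2).factorial := by exact_mod_cast Nat.factorial_pos _
    have p4 : (0:ℚ) < (2*n).factorial := by exact_mod_cast Nat.factorial_pos _
    have p5 : (0:ℚ) < (2*n+2).factorial := by exact_mod_cast Nat.factorial_pos _
    field_simp
  exact_mod_cast hq

lemma main_count (n : ℕ) :
    Nat.card (Walks (2 * n)) = catalan n * catalan (n + 1) := by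
  rw [card_walks (2 * n), ← key_identity n]
  have hmap : (Finset.range (n + 1)).map ⟨fun k => 2 * k, fun a b h => by dsimp at h; omega⟩ ⊆
      Finset.range (2 * n + 1) := by
    intro j hj
    simp only [Finset.mem_map, Finset.mem_range, Function.Embedding.coeFn_mk] at hj
    obtain ⟨k, hk, rfl⟩ := hj
    rw [Finset.mem_range]
    show 2 * k < 2 * n + 1
    omega
  rw [← Finset.sum_subset hmap ?_]
  · rw [Finset.sum_map]
    apply Finset.sum_congr rfl
    intro k hk
    rw [Finset.mem_range] at hk
    show (2 * n).choose (2 * k) * (Nat.card (Exc (2 * k)) * Nat.card (Exc (2 * n - 2 * k))) = _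
    have e1 : 2 * n - 2 * k = 2 * (n - k) := by omega
    rw [e1, excCard_even, excCard_even]

  · intro j hj hjm
    rw [Finset.mem_range] at hj
    rcases Nat.even_or_odd j with ⟨k, rfl⟩ | hodd
    · exfalso
      apply hjm
      simp only [Finset.mem_map, Finset.mem_range, Function.Embedding.coeFn_mk]
      exact ⟨k, by omega, show 2 * k = k + k by omega⟩
    · rw [excCard_odd _ (by obtain ⟨k, rfl⟩ := hodd; omega)]
      simp
open Stirling Real in
noncomputable def u (n : ℕ) : ℝ := (Nat.centralBinom n : ℝ) * Real.sqrt n / 4 ^ n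

open Stirling Real in
lemma stirling_pos (n : ℕ) (hn : 1 ≤ n) : 0 < stirlingSeq n := by
  have hnR : (0:ℝ) < n := by exact_mod_cast hn
  rw [stirlingSeq]
  apply div_pos
  · exact_mod_cast Nat.factorial_pos n
  · exact mul_pos (Real.sqrt_pos.mpr (by positivity)) (pow_pos (div_pos hnR (Real.exp_pos 1)) n)

open Stirling Real in
lemma u_eq (n : ℕ) (hn : 1 ≤ n) : u n = stirlingSeq (2 * n) / stirlingSeq n ^ 2 := by
  have hnR : (0:ℝ) < n := by exact_mod_cast hn
  have hcbn : (Nat.centralBinom n : ℝ) * ((n.factorial : ℝ) * n.factorial) =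
      ((2 * n).factorial : ℝ) := by
    have h := Nat.choose_mul_factorial_mul_factorial (show n ≤ 2 * n by omega)
    rw [show 2 * n - n = n by omega] at h
    have hnat : n.centralBinom * (n.factorial * n.factorial) = (2 * n).factorial := by
      rw [Nat.centralBinom, ← mul_assoc]
      exact h
    exact_mod_cast congrArg (Nat.cast : ℕ → ℝ) hnat
  have hX : (0:ℝ) < Real.sqrt (2 * n) * ((n : ℝ) / Real.exp 1) ^ n :=
    mul_pos (Real.sqrt_pos.mpr (by positivity)) (pow_pos (div_pos hnR (Real.exp_pos 1)) n)
  have hY : (0:ℝ) < Real.sqrt (2 * (2*n : ℕ)) * (((2*n : ℕ) : ℝ) / Real.exp 1) ^ (2*n) := by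
    apply mul_pos (Real.sqrt_pos.mpr (by positivity))
    apply pow_pos (div_pos (by positivity) (Real.exp_pos 1))
  have h1 : (n.factorial : ℝ) = stirlingSeq n * (Real.sqrt (2 * n) * ((n : ℝ) / Real.exp 1) ^ n) := by
    rw [stirlingSeq, div_mul_cancel₀ _ (ne_of_gt hX)]
  have h2 : ((2 * n).factorial : ℝ) =
      stirlingSeq (2 * n) * (Real.sqrt (2 * (2*n : ℕ)) * (((2*n : ℕ) : ℝ) / Real.exp 1) ^ (2*n)) := by
    rw [stirlingSeq, div_mul_cancel₀ _ (ne_of_gt hY)]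
  have hs : 0 < stirlingSeq n := stirling_pos n hn
  -- key algebraic fact
  have e7 : Real.sqrt (2 * (n:ℝ)) ^ 2 = 2 * n := Real.sq_sqrt (by positivity)
  have e6 : Real.sqrt n * Real.sqrt n = (n : ℝ) := Real.mul_self_sqrt (by positivity)
  have e4 : Real.sqrt (2 * ((2*n : ℕ) : ℝ)) = 2 * Real.sqrt n := by
    push_cast
    rw [show (2:ℝ) * (2 * n) = 2^2 * n by ring, Real.sqrt_mul (by positivity),
      Real.sqrt_sq (by norm_num)]
  have e5 : (((2*n : ℕ) : ℝ) / Real.exp 1) ^ (2*n) =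
      4 ^ n * (((n:ℝ) / Real.exp 1) ^ n) ^ 2 := by
    push_cast
    rw [show (2 * (n:ℝ)) / Real.exp 1 = 2 * ((n:ℝ) / Real.exp 1) by ring, mul_pow,
      show (4:ℝ) = 2 ^ 2 by norm_num, ← pow_mul, ← pow_mul, mul_comm n 2]
  have key : (Real.sqrt (2 * ((2*n : ℕ) : ℝ)) * (((2*n : ℕ) : ℝ) / Real.exp 1) ^ (2*n)) * Real.sqrt n
      = (Real.sqrt (2 * (n:ℝ)) * ((n:ℝ) / Real.exp 1) ^ n) ^ 2 * 4 ^ n := by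
    rw [e4, e5, mul_pow, e7]
    linear_combination (2 * (4:ℝ) ^ n * (((n:ℝ) / Real.exp 1) ^ n) ^ 2) * e6
  rw [u, div_eq_div_iff (by positivity) (by positivity)]
  -- goal : cb * √n * stirlingSeq n ^ 2 = stirlingSeq (2n) * 4^n
  have main : (Nat.centralBinom n : ℝ) * (stirlingSeq n *
        (Real.sqrt (2 * n) * ((n : ℝ) / Real.exp 1) ^ n)) ^ 2 =
      stirlingSeq (2*n) * (Real.sqrt (2 * (2*n : ℕ)) * (((2*n : ℕ) : ℝ) / Real.exp 1) ^ (2*n)) := by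
    rw [← h1, ← h2]
    push_cast at hcbn ⊢
    linear_combination hcbn
  -- multiply main by √n and use key
  have hXne : (Real.sqrt (2 * (n:ℝ)) * ((n:ℝ) / Real.exp 1) ^ n) ≠ 0 := ne_of_gt hX
  have expand : (Nat.centralBinom n : ℝ) * stirlingSeq n ^ 2 *
        ((Real.sqrt (2 * (n:ℝ)) * ((n:ℝ) / Real.exp 1) ^ n) ^ 2 * Real.sqrt n) =
      stirlingSeq (2*n) * ((Real.sqrt (2 * (n:ℝ)) * ((n:ℝ) / Real.exp 1) ^ n) ^ 2 * 4 ^ n) := by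
    calc (Nat.centralBinom n : ℝ) * stirlingSeq n ^ 2 *
          ((Real.sqrt (2 * (n:ℝ)) * ((n:ℝ) / Real.exp 1) ^ n) ^ 2 * Real.sqrt n)
        = ((Nat.centralBinom n : ℝ) * (stirlingSeq n *
            (Real.sqrt (2 * n) * ((n : ℝ) / Real.exp 1) ^ n)) ^ 2) * Real.sqrt n := by ring
      _ = (stirlingSeq (2*n) * (Real.sqrt (2 * (2*n : ℕ)) * (((2*n : ℕ) : ℝ) / Real.exp 1) ^ (2*n)))
            * Real.sqrt n := by rw [main]
      _ = stirlingSeq (2*n) * ((Real.sqrt (2 * (2*n : ℕ)) * (((2*n : ℕ) : ℝ) / Real.exp 1) ^ (2*n))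
            * Real.sqrt n) := by ring
      _ = stirlingSeq (2*n) * ((Real.sqrt (2 * (n:ℝ)) * ((n:ℝ) / Real.exp 1) ^ n) ^ 2 * 4 ^ n) := by
            rw [key]
  refine mul_right_cancel₀ (pow_ne_zero 2 hXne) ?_
  calc (Nat.centralBinom n : ℝ) * Real.sqrt n * stirlingSeq n ^ 2 *
        (Real.sqrt (2 * (n:ℝ)) * ((n:ℝ) / Real.exp 1) ^ n) ^ 2
      = (Nat.centralBinom n : ℝ) * stirlingSeq n ^ 2 *
        ((Real.sqrt (2 * (n:ℝ)) * ((n:ℝ) / Real.exp 1) ^ n) ^ 2 * Real.sqrt n) := by ring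
    _ = stirlingSeq (2*n) * ((Real.sqrt (2 * (n:ℝ)) * ((n:ℝ) / Real.exp 1) ^ n) ^ 2 * 4 ^ n) :=
        expand
    _ = stirlingSeq (2*n) * 4 ^ n * (Real.sqrt (2 * (n:ℝ)) * ((n:ℝ) / Real.exp 1) ^ n) ^ 2 := by
        ring

open Stirling Real in
lemma u_tendsto : Filter.Tendsto u Filter.atTop (nhds (Real.sqrt Real.pi)⁻¹) := by
  have h2n : Filter.Tendsto (fun n : ℕ => 2 * n) Filter.atTop Filter.atTop :=
    Filter.tendsto_atTop_mono (fun n => by simp only [id_eq]; omega) Filter.tendsto_id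
  have hA : Filter.Tendsto (fun n : ℕ => stirlingSeq (2 * n)) Filter.atTop
      (nhds (Real.sqrt Real.pi)) := tendsto_stirlingSeq_sqrt_pi.comp h2n
  have hB : Filter.Tendsto (fun n : ℕ => stirlingSeq n ^ 2) Filter.atTop
      (nhds (Real.sqrt Real.pi ^ 2)) := tendsto_stirlingSeq_sqrt_pi.pow 2
  have hpi : Real.sqrt Real.pi ^ 2 ≠ 0 := by
    have : (0:ℝ) < Real.sqrt Real.pi := Real.sqrt_pos.mpr Real.pi_pos
    positivity
  have hval : Real.sqrt Real.pi / Real.sqrt Real.pi ^ 2 = (Real.sqrt Real.pi)⁻¹ := by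
    have hne : Real.sqrt Real.pi ≠ 0 := ne_of_gt (Real.sqrt_pos.mpr Real.pi_pos)
    rw [pow_two, div_mul_cancel_left₀ hne]
  refine Filter.Tendsto.congr' ?_ (hval ▸ hA.div hB hpi)
  filter_upwards [Filter.eventually_ge_atTop 1] with n hn
  exact (u_eq n hn).symm

lemma ratio_eq (n : ℕ) (hn : 1 ≤ n) :
    ((catalan n * catalan (n + 1) : ℕ) : ℝ) / (4 / Real.pi * 16 ^ n / (n : ℝ) ^ 3) =
      u n * u (n + 1) * Real.pi * (Real.sqrt n / Real.sqrt ((n : ℝ) + 1)) *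
        ((n : ℝ) / ((n : ℝ) + 1)) * ((n : ℝ) / ((n : ℝ) + 2)) := by
  have hnR : (0:ℝ) < n := by exact_mod_cast hn
  have hcat1 : ((catalan n : ℕ) : ℝ) = (Nat.centralBinom n : ℝ) / ((n : ℝ) + 1) := by
    rw [eq_div_iff (by positivity)]
    have h := succ_mul_catalan_eq_centralBinom n
    have : ((n + 1) * catalan n : ℕ) = (Nat.centralBinom n : ℕ) := h
    exact_mod_cast by push_cast [← this]; ring
  have hcat2 : ((catalan (n + 1) : ℕ) : ℝ) =
      (Nat.centralBinom (n + 1) : ℝ) / ((n : ℝ) + 2) := by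
    rw [eq_div_iff (by positivity)]
    have h := succ_mul_catalan_eq_centralBinom (n + 1)
    have : ((n + 1 + 1) * catalan (n + 1) : ℕ) = (Nat.centralBinom (n + 1) : ℕ) := h
    exact_mod_cast by push_cast [← this]; ring
  have hs2 : Real.sqrt (n : ℝ) ^ 2 = (n : ℝ) := Real.sq_sqrt (by positivity)
  have hspos : 0 < Real.sqrt (n : ℝ) := Real.sqrt_pos.mpr hnR
  have htpos : 0 < Real.sqrt ((n : ℝ) + 1) := Real.sqrt_pos.mpr (by positivity)
  have hpi : (0:ℝ) < Real.pi := Real.pi_pos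
  simp only [u]
  push_cast
  rw [hcat1, hcat2]
  push_cast
  set s := Real.sqrt (n : ℝ) with hs
  set t := Real.sqrt ((n : ℝ) + 1) with ht
  rw [← hs2]
  have h16 : (16 : ℝ) ^ n = 4 ^ n * 4 ^ n := by
    rw [← mul_pow]; norm_num
  have h41 : (4 : ℝ) ^ (n + 1) = 4 ^ n * 4 := pow_succ 4 n
  rw [h16, h41]
  have h4pos : (0:ℝ) < 4 ^ n := by positivity
  have hs2pos : (0:ℝ) < s ^ 2 := by positivity
  field_simp
end QWAux

theorem stmt_12 :
    (∀ n : ℕ, qwalkCount 0 0 (2 * n) = catalan n * catalan (n + 1)) ∧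
    Tendsto (fun n : ℕ =>
        (qwalkCount 0 0 (2 * n) : ℝ) / (4 / Real.pi * 16 ^ n / (n : ℝ) ^ 3))
      atTop (nhds 1) := by
  have part1 : ∀ n : ℕ, qwalkCount 0 0 (2 * n) = catalan n * catalan (n + 1) := by
    intro n
    exact QWAux.main_count n
  refine ⟨part1, ?_⟩
  have hu := QWAux.u_tendsto
  have hu1 : Tendsto (fun n : ℕ => QWAux.u (n + 1)) atTop (nhds (Real.sqrt Real.pi)⁻¹) :=
    hu.comp (tendsto_add_atTop_nat 1)
  have hf5 : Tendsto (fun n : ℕ => (n : ℝ) / ((n : ℝ) + 1)) atTop (nhds 1) :=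
    tendsto_natCast_div_add_atTop (1 : ℝ)
  have hf6 : Tendsto (fun n : ℕ => (n : ℝ) / ((n : ℝ) + 2)) atTop (nhds 1) :=
    tendsto_natCast_div_add_atTop (2 : ℝ)
  have hf4 : Tendsto (fun n : ℕ => Real.sqrt n / Real.sqrt ((n : ℝ) + 1)) atTop (nhds 1) := by
    have h := (tendsto_natCast_div_add_atTop (1 : ℝ)).sqrt
    rw [Real.sqrt_one] at h
    refine h.congr ?_
    intro n
    rw [Real.sqrt_div (by positivity)]
  have hpiC : Tendsto (fun _ : ℕ => Real.pi) atTop (nhds Real.pi) := tendsto_const_nhds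
  have hbig := ((((hu.mul hu1).mul hpiC).mul hf4).mul hf5).mul hf6
  have hone : (Real.sqrt Real.pi)⁻¹ * (Real.sqrt Real.pi)⁻¹ * Real.pi * 1 * 1 * 1 = 1 := by
    have hne : Real.sqrt Real.pi ≠ 0 := ne_of_gt (Real.sqrt_pos.mpr Real.pi_pos)
    field_simp
    rw [Real.sq_sqrt Real.pi_pos.le]
  rw [hone] at hbig
  refine hbig.congr' ?_
  filter_upwards [eventually_ge_atTop 1] with n hn
  rw [part1 n]
  exact (QWAux.ratio_eq n hn).symm
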